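/- arXiv:math/0201198 — 2 statements merged into one kernel-verified Lean document; each statement's English description precedes it below -/
import Mathlib

section
/- Let (A_n) be an inverse system of abelian groups with transition maps φ_n : A_{n+1} → A_n. Suppose each A_n contains a subgroup B_n such that φ_n(B_{n+1}) = 0 and the induced map A_{n+1}/B_{n+1} → A_n/B_n is an isomorphism for all n ≥ 2. Then lim¹ A_n = 0 and lim A_n ≅ A_{n_0}/B_{n_0} for every n_0 ≥ 2. -/
/- STATEMENT 4: let `(Aₙ)` be an inverse system of abelian groups with transition
maps `φₙ : A_{n+1} → Aₙ`, and `Bₙ ⊆ Aₙ` a sub-inverse-system (`φₙ(B_{n+1}) ⊆ Bₙ`)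
such that for `n ≥ 2`: `φₙ(B_{n+1}) = 0` and the induced map
`A_{n+1}/B_{n+1} → Aₙ/Bₙ` is an isomorphism. Then `lim¹ Aₙ = 0` and
`lim Aₙ ≅ A_{n₀}/B_{n₀}` for every `n₀ ≥ 2`. -/

/-- The inverse limit of an inverse system of abelian groups. -/
def limSub (X : ℕ → Type*) [∀ n, AddCommGroup (X n)] (f : ∀ n, X (n + 1) →+ X n) :
    AddSubgroup (∀ n, X n) where
  carrier := {x | ∀ n, f n (x (n + 1)) = x n}
  add_mem' := by
    intro a b ha hb n
    simp only [Pi.add_apply, map_add, ha n, hb n]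
  zero_mem' := by
    intro n
    simp
  neg_mem' := by
    intro a ha n
    simp [ha n]

/-- The map `(xₙ) ↦ (xₙ - fₙ(x_{n+1}))` on `Π Xₙ` whose cokernel is `lim¹`. -/
def shiftHom (X : ℕ → Type*) [∀ n, AddCommGroup (X n)] (f : ∀ n, X (n + 1) →+ X n) :
    (∀ n, X n) →+ (∀ n, X n) :=
  AddMonoidHom.mk' (fun x n => x n - f n (x (n + 1))) (by
    intro a b
    funext n
    simp only [Pi.add_apply, map_add]
    abel)

/-- `lim¹` of an inverse system: the cokernel of `shiftHom`. -/
abbrev limOne (X : ℕ → Type*) [∀ n, AddCommGroup (X n)] (f : ∀ n, X (n + 1) →+ X n) :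
    Type _ :=
  (∀ n, X n) ⧸ (shiftHom X f).range

theorem stmt4 (A : ℕ → Type*) [∀ n, AddCommGroup (A n)]
    (φ : ∀ n, A (n + 1) →+ A n) (B : ∀ n, AddSubgroup (A n))
    -- (Bₙ) is a sub-inverse-system of (Aₙ)
    (hsub : ∀ n, (B (n + 1)).map (φ n) ≤ B n)
    -- for n ≥ 2 the transition maps vanish on B
    (hzero : ∀ n, 2 ≤ n → ∀ b ∈ B (n + 1), φ n b = 0)
    -- for n ≥ 2 the induced maps A_{n+1}/B_{n+1} → A_n/B_n are isomorphisms
    (hquot_surj : ∀ n, 2 ≤ n → ∀ a : A n, ∃ a' : A (n + 1), φ n a' - a ∈ B n)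
    (hquot_inj : ∀ n, 2 ≤ n → ∀ a' : A (n + 1), φ n a' ∈ B n → a' ∈ B (n + 1)) :
    -- lim¹ A = 0
    Subsingleton (limOne A φ) ∧
    -- lim A ≅ A_{n₀}/B_{n₀} for every n₀ ≥ 2
    (∀ n₀ : ℕ, 2 ≤ n₀ → Nonempty ((limSub A φ) ≃+ (A n₀ ⧸ B n₀))) := by
  classical
  choose g hg using hquot_surj
  -- Part 1: shiftHom is surjective
  have hshift : Function.Surjective (shiftHom A φ) := by
    intro y
    let aseq : ∀ k, A (k + 2) := fun k =>
      Nat.rec (motive := fun k => A (k + 2)) 0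
        (fun k ak => g (k + 2) (by omega) (ak - y (k + 2))) k
    let z : ∀ k, A (k + 2) := fun k => y (k + 2) + φ (k + 2) (aseq (k + 1))
    refine ⟨fun n => match n with
      | 0 => y 0 + φ 0 (y 1 + φ 1 (z 0))
      | 1 => y 1 + φ 1 (z 0)
      | (k + 2) => z k, ?_⟩
    funext n
    match n with
    | 0 =>
      show (y 0 + φ 0 (y 1 + φ 1 (z 0))) - φ 0 (y 1 + φ 1 (z 0)) = y 0
      abel
    | 1 =>
      show (y 1 + φ 1 (z 0)) - φ 1 (z 0) = y 1
      abel
    | (k + 2) =>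
      show z k - φ (k + 2) (z (k + 1)) = y (k + 2)
      have hmem := hg (k + 3) (by omega) (aseq (k + 1) - y (k + 3))
      have hb : φ (k + 2) (φ (k + 3) (aseq (k + 2)) - (aseq (k + 1) - y (k + 3))) = 0 :=
        hzero (k + 2) (by omega) _ hmem
      rw [map_sub, sub_eq_zero, map_sub] at hb
      show (y (k + 2) + φ (k + 2) (aseq (k + 1))) -
          φ (k + 2) (y (k + 3) + φ (k + 3) (aseq (k + 2))) = y (k + 2)
      rw [map_add, hb]
      abel
  -- Part 2: the evaluation map lim → A 2 ⧸ B 2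
  let F : (limSub A φ) →+ (A 2 ⧸ B 2) :=
    (QuotientAddGroup.mk' (B 2)).comp ((Pi.evalAddMonoidHom A 2).comp (limSub A φ).subtype)
  have Finj : Function.Injective F := by
    rw [injective_iff_map_eq_zero]
    intro x hx
    have hx2 : (x : ∀ n, A n) 2 ∈ B 2 := (QuotientAddGroup.eq_zero_iff _).mp hx
    have hmemB : ∀ k, (x : ∀ n, A n) (k + 2) ∈ B (k + 2) := by
      intro k
      induction k with
      | zero => exact hx2
      | succ k ih =>
        exact hquot_inj (k + 2) (by omega) _ (by rw [x.2 (k + 2)]; exact ih)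
    have hzero' : ∀ k, (x : ∀ n, A n) (k + 2) = 0 := by
      intro k
      rw [← x.2 (k + 2)]
      exact hzero (k + 2) (by omega) _ (hmemB (k + 1))
    have h1 : (x : ∀ n, A n) 1 = 0 := by rw [← x.2 1, hzero' 0, map_zero]
    have h0 : (x : ∀ n, A n) 0 = 0 := by rw [← x.2 0, h1, map_zero]
    apply Subtype.ext
    funext n
    match n with
    | 0 => exact h0
    | 1 => exact h1
    | (k + 2) => exact hzero' k
  have Fsurj : Function.Surjective F := by
    intro q
    obtain ⟨a, rfl⟩ := QuotientAddGroup.mk'_surjective (B 2) q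
    let aseq : ∀ k, A (k + 2) := fun k =>
      Nat.rec (motive := fun k => A (k + 2)) a
        (fun k ak => g (k + 2) (by omega) ak) k
    let z : ∀ k, A (k + 2) := fun k => φ (k + 2) (aseq (k + 1))
    refine ⟨⟨fun n => match n with
      | 0 => φ 0 (φ 1 (z 0))
      | 1 => φ 1 (z 0)
      | (k + 2) => z k, ?_⟩, ?_⟩
    · intro n
      match n with
      | 0 => rfl
      | 1 => rfl
      | (k + 2) =>
        show φ (k + 2) (z (k + 1)) = z k
        have hmem := hg (k + 3) (by omega) (aseq (k + 1))
        have hb : φ (k + 2) (φ (k + 3) (aseq (k + 2)) - aseq (k + 1)) = 0 :=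
          hzero (k + 2) (by omega) _ hmem
        rw [map_sub, sub_eq_zero] at hb
        exact hb
    · show QuotientAddGroup.mk (φ 2 (aseq 1)) = QuotientAddGroup.mk a
      exact (QuotientAddGroup.eq_iff_sub_mem).mpr (hg 2 (by omega) a)
  -- Part 3: the chain of quotient isomorphisms
  have stepIso : ∀ n, 2 ≤ n → Nonempty ((A (n + 1) ⧸ B (n + 1)) ≃+ (A n ⧸ B n)) := by
    intro n hn
    refine ⟨AddEquiv.ofBijective
      (QuotientAddGroup.map (B (n + 1)) (B n) (φ n)
        ((AddSubgroup.map_le_iff_le_comap).mp (hsub n))) ⟨?_, ?_⟩⟩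
    · rw [injective_iff_map_eq_zero]
      intro q hq
      induction q using QuotientAddGroup.induction_on with
      | H a' =>
        rw [QuotientAddGroup.map_mk, QuotientAddGroup.eq_zero_iff] at hq
        rw [QuotientAddGroup.eq_zero_iff]
        exact hquot_inj n hn a' hq
    · intro q
      induction q using QuotientAddGroup.induction_on with
      | H a =>
        refine ⟨QuotientAddGroup.mk (g n hn a), ?_⟩
        rw [QuotientAddGroup.map_mk]
        exact (QuotientAddGroup.eq_iff_sub_mem).mpr (hg n hn a)
  have chain : ∀ n, 2 ≤ n → Nonempty ((A 2 ⧸ B 2) ≃+ (A n ⧸ B n)) := by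
    intro n hn
    induction n, hn using Nat.le_induction with
    | base => exact ⟨AddEquiv.refl _⟩
    | succ n hn ih =>
      obtain ⟨e⟩ := ih
      obtain ⟨e'⟩ := stepIso n hn
      exact ⟨e.trans e'.symm⟩
  constructor
  · have hrange : (shiftHom A φ).range = ⊤ :=
      AddMonoidHom.range_eq_top_of_surjective _ hshift
    unfold limOne
    rw [hrange]
    exact QuotientAddGroup.subsingleton_quotient_top
  · intro n₀ h
    obtain ⟨e⟩ := chain n₀ h
    exact ⟨(AddEquiv.ofBijective F ⟨Finj, Fsurj⟩).trans e⟩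
end

section
/- Let (P, {·,·}) be a Poisson algebra of smooth functions on a Poisson manifold with Poisson bivector G, and define on differential forms δ := i_G ∘ d − d ∘ i_G, where i_G is contraction with G. Then δ satisfies the explicit formula δ(f_0 df_1 ∧ … ∧ df_k) = Σ_{1≤j≤k} (−1)^{j+1} {f_0, f_j} df_1 ∧ … ∧ \widehat{df_j} ∧ … ∧ df_k + Σ_{1≤i<j≤k} (−1)^{i+j} f_0 d{f_i, f_j} ∧ df_1 ∧ … ∧ \widehat{df_i} ∧ … ∧ \widehat{df_j} ∧ … ∧ df_k. -/
/- STATEMENT 6: on a Poisson manifold with Poisson algebra `(C^∞(X), {·,·})` and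
Poisson bivector `G`, the operator `δ = i_G ∘ d - d ∘ i_G` satisfies
`δ(f₀ df₁ ∧ … ∧ df_k)
   = Σ_{1≤j≤k} (-1)^{j+1} {f₀,f_j} df₁ ∧ … ∧ \hat{df_j} ∧ … ∧ df_k
   + Σ_{1≤i<j≤k} (-1)^{i+j} f₀ d{f_i,f_j} ∧ df₁ ∧ … ∧ \hat{df_i} ∧ … ∧ \hat{df_j} ∧ … ∧ df_k`.
The de Rham complex is modelled abstractly: `A` is the algebra of functions with
bracket `{·,·}`, `Ω` the graded space of forms, `mk f₀ [f₁,…,f_k]` the form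
`f₀ df₁ ∧ … ∧ df_k`, `d` the de Rham differential and `i_G` the contraction with
`G`; standard facts (the value of `d` and of `i_G` on such generators, Leibniz,
antisymmetry) are hypotheses. -/

/-- Transport along an equality of degrees. -/
def castW {Ω : ℤ → Type*} [∀ k, AddCommGroup (Ω k)] {m n : ℤ} (h : m = n) :
    Ω m →+ Ω n := by
  subst h; exact AddMonoidHom.id _

lemma lenE {α : Type*} (l : List α) (j : ℕ) (hj : j < l.length) :
    ((l.eraseIdx j).length : ℤ) = (l.length : ℤ) - 1 := by
  have h2 : (l.eraseIdx j).length = _ := List.length_eraseIdx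
  rw [if_pos hj] at h2
  omega

lemma lenE2 {α : Type*} (l : List α) (i j : ℕ) (hij : i < j) (hj : j < l.length) :
    (((l.eraseIdx j).eraseIdx i).length : ℤ) = (l.length : ℤ) - 2 := by
  have h1 : (l.eraseIdx j).length = _ := List.length_eraseIdx
  rw [if_pos hj] at h1
  have h2 : ((l.eraseIdx j).eraseIdx i).length = _ := List.length_eraseIdx
  rw [if_pos (by omega)] at h2
  omega

lemma lenE2cons {α : Type*} (a : α) (l : List α) (i j : ℕ) (hij : i < j)
    (hj : j < l.length) :
    (((a :: (l.eraseIdx j).eraseIdx i)).length : ℤ) = (l.length : ℤ) - 1 := by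
  have := lenE2 l i j hij hj
  simp only [List.length_cons]
  omega

section helpers
variable {Ω : ℤ → Type*} [∀ k, AddCommGroup (Ω k)]

lemma castW_castW {a b c : ℤ} (h1 : a = b) (h2 : b = c) (x : Ω a) :
    castW (Ω := Ω) h2 (castW h1 x) = castW (h1.trans h2) x := by
  subst h1; subst h2; rfl

lemma hom_dite {M N : Type*} [AddCommGroup M] [AddCommGroup N] (F : M →+ N)
    (P : Prop) [Decidable P] (a : P → M) :
    F (dite P a (fun _ => 0)) = dite P (fun p => F (a p)) (fun _ => 0) := by
  split <;> simp

lemma castW_dite {m n : ℤ} (h : m = n) (P : Prop) [Decidable P] (a : P → Ω m) :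
    castW h (dite P a (fun _ => 0)) = dite P (fun p => castW h (a p)) (fun _ => 0) := by
  split <;> simp

lemma key {A : Type*} (mk : A → (l : List A) → Ω (l.length)) {f f' : A} {L L' : List A}
    (hf : f = f') (hL : L = L') {t : ℤ} (h : (L.length : ℤ) = t) (h' : (L'.length : ℤ) = t) :
    castW h (mk f L) = castW h' (mk f' L') := by
  subst hf; subst hL; rfl

end helpers

theorem stmt6 (A : Type*) [CommRing A] (bracket : A → A → A)
    (Ω : ℤ → Type*) [∀ k, AddCommGroup (Ω k)]
    -- `mk f₀ [f₁,…,f_k]` is the k-form `f₀ df₁ ∧ … ∧ df_k`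
    (mk : A → (l : List A) → Ω (l.length))
    (d : ∀ k, Ω k →+ Ω (k + 1)) (iG : ∀ k, Ω k →+ Ω (k - 2))
    -- d(f₀ df₁ ∧ … ∧ df_k) = df₀ ∧ df₁ ∧ … ∧ df_k
    (hd : ∀ (f₀ : A) (l : List A),
      d (l.length) (mk f₀ l) = castW (by simp) (mk 1 (f₀ :: l)))
    -- the contraction with the bivector G on generators:
    -- i_G(g₀ dg₁ ∧ … ∧ dg_m) = Σ_{i<j} (-1)^{i+j-1} g₀{g_i,g_j} dg₁ … ĝ_i … ĝ_j … dg_m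
    (hiG : ∀ (g₀ : A) (l : List A),
      iG (l.length) (mk g₀ l) =
        ∑ j : Fin l.length, ∑ i : Fin l.length,
          if h : (i : ℕ) < (j : ℕ) then
            ((-1 : ℤ) ^ ((i : ℕ) + (j : ℕ) + 1)) •
              castW (lenE2 l i j h j.isLt)
                (mk (g₀ * bracket (l.get i) (l.get j)) ((l.eraseIdx (j : ℕ)).eraseIdx (i : ℕ)))
          else 0)
    -- Leibniz rule: d(ab) = a db + b da
    (hLeib : ∀ (a b : A) (l : List A),
      castW (show ((((a * b) :: l).length : ℕ) : ℤ) = (l.length : ℤ) + 1 by simp)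
          (mk 1 ((a * b) :: l))
        = castW (show (((b :: l).length : ℕ) : ℤ) = (l.length : ℤ) + 1 by simp) (mk a (b :: l))
          + castW (show (((a :: l).length : ℕ) : ℤ) = (l.length : ℤ) + 1 by simp) (mk b (a :: l)))
    -- forms are alternating in the dfᵢ's
    (halt : ∀ (f : A) (l₁ l₂ : List A) (a b : A),
      mk f (l₁ ++ a :: b :: l₂) = - castW (by simp) (mk f (l₁ ++ b :: a :: l₂)))
    -- the bracket is antisymmetric
    (hbr : ∀ a b : A, bracket a b = - bracket b a) :
    ∀ (f₀ : A) (l : List A),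
      castW (by ring) (iG ((l.length : ℤ) + 1) (d (l.length) (mk f₀ l)))
        - castW (by ring) (d ((l.length : ℤ) - 2) (iG (l.length) (mk f₀ l)))
      = (∑ j : Fin l.length, ((-1 : ℤ) ^ (j : ℕ)) •
            castW (lenE l j j.isLt) (mk (bracket f₀ (l.get j)) (l.eraseIdx (j : ℕ))))
        + ∑ j : Fin l.length, ∑ i : Fin l.length,
            if h : (i : ℕ) < (j : ℕ) then
              ((-1 : ℤ) ^ ((i : ℕ) + (j : ℕ))) •
                castW (lenE2cons _ l i j h j.isLt)
                  (mk f₀ (bracket (l.get i) (l.get j) :: (l.eraseIdx (j : ℕ)).eraseIdx (i : ℕ)))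
            else 0 := by
  intro f₀ l
  have dC : ∀ {m n : ℤ} (h : m = n) (x : Ω m),
      d n (castW h x) = castW (congrArg (· + 1) h) (d m x) := by
    intro m n h x; subst h; rfl
  have iC : ∀ {m n : ℤ} (h : m = n) (x : Ω m),
      iG n (castW h x) = castW (congrArg (· - 2) h) (iG m x) := by
    intro m n h x; subst h; rfl
  have e1 : castW (show ((l.length : ℤ) + 1 - 2 : ℤ) = (l.length : ℤ) - 1 by ring)
      (iG ((l.length : ℤ) + 1) (d (l.length) (mk f₀ l)))
    = (∑ j : Fin l.length, ((-1 : ℤ) ^ (j : ℕ)) •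
          castW (lenE l j j.isLt) (mk (bracket f₀ (l.get j)) (l.eraseIdx (j : ℕ))))
      + ∑ j : Fin l.length, ∑ i : Fin l.length,
          if h : (i : ℕ) < (j : ℕ) then
            ((-1 : ℤ) ^ ((i : ℕ) + (j : ℕ) + 1)) •
              castW (lenE2cons f₀ l i j h j.isLt)
                (mk (bracket (l.get i) (l.get j)) (f₀ :: (l.eraseIdx (j : ℕ)).eraseIdx (i : ℕ)))
          else 0 := by
    rw [hd f₀ l, iC, castW_castW, hiG 1 (f₀ :: l)]
    simp only [map_sum, castW_dite, map_zsmul, castW_castW]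
    simp only [List.length_cons, Fin.sum_univ_succ, Fin.val_zero, Fin.val_succ,
      Nat.not_lt_zero, dite_false, Finset.sum_const_zero, zero_add,
      Nat.zero_lt_succ, dite_true, Nat.add_lt_add_iff_right]
    rw [Finset.sum_eq_zero (fun x _ => dif_neg (Nat.not_lt_zero _)), zero_add]
    rw [Finset.sum_add_distrib]
    have pm : ∀ k : ℕ, (-1 : ℤ) ^ (k + 2) = (-1) ^ k := fun k => by
      rw [pow_add]; norm_num
    congr 1
    · refine Finset.sum_congr rfl fun x _ => ?_
      exact congrArg₂ (· • ·) (pm ↑x)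
        (key mk (by simp) (by simp [List.eraseIdx_cons_succ]) _ _)
    · refine Finset.sum_congr rfl fun x _ => Finset.sum_congr rfl fun x1 _ => ?_
      by_cases h : (x1 : ℕ) < (x : ℕ)
      · rw [dif_pos h, dif_pos h]
        refine congrArg₂ (· • ·) ?_
          (key mk (by simp) (by simp [List.eraseIdx_cons_succ]) _ _)
        have h2 : (x1 : ℕ) + 1 + ((x : ℕ) + 1) + 1 = ((x1 : ℕ) + (x : ℕ) + 1) + 2 := by omega
        rw [h2, pow_add]; norm_num
      · rw [dif_neg h, dif_neg h]
  have e2 : castW (show ((l.length : ℤ) - 2 + 1 : ℤ) = (l.length : ℤ) - 1 by ring)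
      (d ((l.length : ℤ) - 2) (iG (l.length) (mk f₀ l)))
    = ∑ j : Fin l.length, ∑ i : Fin l.length,
        if h : (i : ℕ) < (j : ℕ) then
          ((-1 : ℤ) ^ ((i : ℕ) + (j : ℕ) + 1)) •
            (castW (lenE2cons (bracket (l.get i) (l.get j)) l i j h j.isLt)
                (mk f₀ (bracket (l.get i) (l.get j) :: (l.eraseIdx (j : ℕ)).eraseIdx (i : ℕ)))
              + castW (lenE2cons f₀ l i j h j.isLt)
                (mk (bracket (l.get i) (l.get j)) (f₀ :: (l.eraseIdx (j : ℕ)).eraseIdx (i : ℕ))))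
        else 0 := by
    rw [hiG f₀ l]
    simp only [map_sum, hom_dite, map_zsmul, dC, hd, hLeib, map_add]
    simp only [castW_castW]
  rw [e1, e2, add_sub_assoc]
  congr 1
  rw [← Finset.sum_sub_distrib]
  refine Finset.sum_congr rfl fun j _ => ?_
  rw [← Finset.sum_sub_distrib]
  refine Finset.sum_congr rfl fun i _ => ?_
  by_cases h : (i : ℕ) < (j : ℕ)
  · rw [dif_pos h, dif_pos h, dif_pos h, smul_add]
    have hp : ((-1 : ℤ) ^ ((i : ℕ) + (j : ℕ))) = -((-1 : ℤ) ^ ((i : ℕ) + (j : ℕ) + 1)) := by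
      rw [pow_succ]; ring
    rw [hp, neg_smul]
    abel
  · rw [dif_neg h, dif_neg h, dif_neg h]
    abel
end
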